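/- Noncommutative Newton interpolation: Let A be a unital Banach algebra, f holomorphic on an open set U ⊂ ℂ, and a_0,...,a_n ∈ A with spec(a_j) ⊂ U for all j. With the noncommutative divided difference [a_0,...,a_j]_π f applied to a product defined by the contour integral ([a_0,...,a_j]_π f)(c_1⋯c_j) := (1/(2πi)) ∮_γ f(ζ)(ζ-a_0)^{-1} c_1 (ζ-a_1)^{-1} ⋯ c_j (ζ-a_j)^{-1} dζ, one has f(a_n) = f(a_0) + ∑_{j=1}^n ([a_0,...,a_j]_π f)((a_n - a_0)(a_n - a_1) ⋯ (a_n - a_{j-1})). -/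

import Mathlib

open Metric

variable {A : Type*} [NormedRing A] [NormedAlgebra ℂ A] [CompleteSpace A]

/-- The noncommutative divided difference paired with elements `c₁,…,cⱼ`:
`([a₀,…,aⱼ]_π f)(c₁⋯cⱼ) = (1/2πi) ∮ f(ζ)(ζ-a₀)⁻¹ c₁ (ζ-a₁)⁻¹ ⋯ cⱼ (ζ-aⱼ)⁻¹ dζ`,
the contour being the positively oriented circle of center `z₀` and radius `R`.
For `j = 0` this is the holomorphic functional calculus `f(a₀)`. -/
noncomputable def ncDivDiff (f : ℂ → ℂ) (z₀ : ℂ) (R : ℝ) {n : ℕ}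
    (a : Fin (n + 1) → A) (b : Fin n → A) : A :=
  (2 * Real.pi * Complex.I)⁻¹ •
    ∮ ζ in C(z₀, R), f ζ •
      ((List.ofFn fun j : Fin n =>
          Ring.inverse (algebraMap ℂ A ζ - a j.castSucc) * b j).prod *
        Ring.inverse (algebraMap ℂ A ζ - a (Fin.last n)))

/-!
Everything happens under the integral sign. Write `Rᵢ = (ζ - aᵢ)⁻¹` and
`Pₖ = R₀ (aₙ - a₀) ⋯ Rₖ₋₁ (aₙ - aₖ₋₁)`. The second resolvent identity
`Rₖ (aₙ - aₖ) Rₙ = Rₙ - Rₖ` gives `Pₖ Rₖ = Pₖ Rₙ - Pₖ₊₁ Rₙ`, so `∑_{k ≤ n} Pₖ Rₖ` telescopes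
to `Rₙ`, as `Pₙ₊₁` contains the factor `aₙ - aₙ = 0`. Integrating `f(ζ)` against this identity
on the circle gives the formula, once `a` is extended to an `ℕ`-indexed family by `aᵢ = aₙ`
for `i ≥ n`.
-/

open Finset spectrum

theorem spectrum.sum_range_newton_resolvent {R B : Type*} [CommSemiring R] [Ring B] [Algebra R B]
    {r : R} {m : ℕ} {a : ℕ → B} (ha : ∀ i ≤ m, r ∈ resolventSet R (a i)) :
    ∑ k ∈ range (m + 1),
      (List.ofFn fun i : Fin k => resolvent (a i) r * (a m - a i)).prod * resolvent (a k) r =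
      resolvent (a m) r := by
  set P : ℕ → B := fun k => (List.ofFn fun i : Fin k => resolvent (a i) r * (a m - a i)).prod
  have hP_succ (k : ℕ) : P (k + 1) = P k * (resolvent (a k) r * (a m - a k)) := by
    simp only [P, List.ofFn_succ', List.prod_concat, Fin.val_castSucc, Fin.val_last]
  have hstep : ∀ k ∈ range (m + 1),
      P k * resolvent (a k) r = P k * resolvent (a m) r - P (k + 1) * resolvent (a m) r := by
    intro k hk
    have hres : resolvent (a k) r * (a m - a k) * resolvent (a m) r =
        resolvent (a m) r - resolvent (a k) r := by
      rw [← neg_sub (a k), mul_neg, neg_mul,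
        ← resolvent_sub_resolvent (ha k (mem_range_succ_iff.mp hk)) (ha m le_rfl), neg_sub]
    rw [hP_succ, mul_assoc, mul_assoc, ← mul_sub, ← mul_assoc, hres, sub_sub_cancel]
  have hP_zero : P 0 = 1 := List.prod_nil
  have hP_last : P (m + 1) = 0 := by rw [hP_succ, sub_self, mul_zero, mul_zero]
  rw [sum_congr rfl hstep, sum_range_sub', hP_zero, hP_last, one_mul, zero_mul, sub_zero]

theorem continuousOn_list_ofFn_prod {X M : Type*} [TopologicalSpace X] [Monoid M]
    [TopologicalSpace M] [ContinuousMul M] {k : ℕ} {g : Fin k → X → M} {s : Set X}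
    (hg : ∀ i, ContinuousOn (g i) s) :
    ContinuousOn (fun x => (List.ofFn fun i => g i x).prod) s := by
  simpa only [List.ofFn_eq_map] using continuousOn_list_prod (List.finRange k) fun i _ => hg i

theorem ncDivDiff_eq_circleIntegral {B : Type*} [NormedRing B] [NormedAlgebra ℂ B] (f : ℂ → ℂ)
    (z₀ : ℂ) (R : ℝ) (k : ℕ) (e b : ℕ → B) :
    ncDivDiff f z₀ R (fun i : Fin (k + 1) => e i) (fun i : Fin k => b i) =
      (2 * Real.pi * Complex.I)⁻¹ • ∮ ζ in C(z₀, R), f ζ •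
        ((List.ofFn fun i : Fin k => resolvent (e i) ζ * b i).prod * resolvent (e k) ζ) :=
  rfl

theorem ncDivDiff_fin_one {B : Type*} [NormedRing B] [NormedAlgebra ℂ B] (f : ℂ → ℂ) (z₀ : ℂ)
    (R : ℝ) (x : B) (b : Fin 0 → B) :
    ncDivDiff f z₀ R (fun _ : Fin 1 => x) b =
      (2 * Real.pi * Complex.I)⁻¹ • ∮ ζ in C(z₀, R), f ζ • resolvent x ζ := by
  simp only [ncDivDiff, List.ofFn_zero, List.prod_nil, one_mul, resolvent]

theorem ncDivDiff_newton {B : Type*} [NormedRing B] [NormedAlgebra ℂ B] [CompleteSpace B]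
    {f : ℂ → ℂ} {z₀ : ℂ} {R : ℝ} (hR : 0 ≤ R) (hf : ContinuousOn f (sphere z₀ R))
    {n : ℕ} {e : ℕ → B} (he : ∀ i ≤ n, sphere z₀ R ⊆ resolventSet ℂ (e i)) :
    ncDivDiff f z₀ R (fun _ : Fin 1 => e n) (fun i => i.elim0) =
      ∑ k ∈ range (n + 1),
        ncDivDiff f z₀ R (fun i : Fin (k + 1) => e i) (fun i : Fin k => e n - e i) := by
  have hcont (i : ℕ) (hi : i ≤ n) : ContinuousOn (resolvent (e i)) (sphere z₀ R) :=
    (HasDerivAt.continuousOn fun _ hζ ↦ hasDerivAt_resolvent_const_left hζ).mono (he i hi)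
  have hint : ∀ k ∈ range (n + 1), CircleIntegrable (fun ζ => f ζ •
      ((List.ofFn fun i : Fin k => resolvent (e i) ζ * (e n - e i)).prod *
        resolvent (e k) ζ)) z₀ R := by
    intro k hk
    have hk : k ≤ n := mem_range_succ_iff.mp hk
    refine (hf.smul ((continuousOn_list_ofFn_prod fun i => ?_).mul (hcont k hk))).circleIntegrable
      hR
    exact (hcont i (by omega)).mul continuousOn_const
  rw [ncDivDiff_fin_one,
    sum_congr rfl fun k _ => ncDivDiff_eq_circleIntegral f z₀ R k e (fun i => e n - e i),
    ← smul_sum, ← circleIntegral.integral_fun_sum hint]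
  congr 1
  refine circleIntegral.integral_congr hR fun ζ hζ => ?_
  simp only [← smul_sum, sum_range_newton_resolvent fun i hi => he i hi hζ]

theorem Fin.castLE_eq_clamp {k n : ℕ} (h : k ≤ n + 1) (i : Fin k) :
    Fin.castLE h i = Fin.clamp i n :=
  Fin.ext (by simp only [Fin.val_castLE, Fin.clamp]; omega)

theorem ncNewton_general (n : ℕ) (U : Set ℂ) (f : ℂ → ℂ)
    (hf : DifferentiableOn ℂ f U) (z₀ : ℂ) (R : ℝ) (hR : 0 < R)
    (hUc : closedBall z₀ R ⊆ U)
    (a : Fin (n + 1) → A) (hspec : ∀ j, spectrum ℂ (a j) ⊆ ball z₀ R) :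
    ncDivDiff f z₀ R (fun _ : Fin 1 => a (Fin.last n)) (fun i => i.elim0) =
      ncDivDiff f z₀ R (fun _ : Fin 1 => a 0) (fun i => i.elim0) +
        ∑ j : Fin n,
          ncDivDiff f z₀ R
            (fun i : Fin (j.1 + 2) => a (Fin.castLE (Nat.succ_le_succ j.2) i))
            (fun i : Fin (j.1 + 1) =>
              a (Fin.last n) - a (Fin.castLE (Nat.succ_le_succ j.2) (Fin.castSucc i))) := by
  have hsphere (j : Fin (n + 1)) : sphere z₀ R ⊆ resolventSet ℂ (a j) := fun ζ hζ =>
    spectrum.notMem_iff.mp (sphere_disjoint_ball.notMem_of_mem_left hζ <| hspec j ·)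
  have hnewton := ncDivDiff_newton hR.le (hf.continuousOn.mono (sphere_subset_closedBall.trans hUc))
    (n := n) (e := fun i => a (Fin.clamp i n)) fun i _ => hsphere _
  rw [sum_range_succ', ← Fin.sum_univ_eq_sum_range, Fin.clamp_eq_last n n le_rfl] at hnewton
  rw [hnewton, add_comm]
  simp only [Fin.castLE_eq_clamp, Fin.val_castSucc]
  congr 2
  · funext i
    rw [Fin.val_eq_zero i]
    rfl
  · funext i
    exact i.elim0

/-- Noncommutative Newton interpolation formula:
`f(aₙ) = f(a₀) + ∑_{j=1}^n ([a₀,…,aⱼ]_π f)((aₙ-a₀)(aₙ-a₁)⋯(aₙ-a_{j-1}))`,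
where `f(a)` denotes the holomorphic functional calculus given by the Cauchy
integral over a circle encircling the spectra of all the `aⱼ`. -/
theorem ncNewton (n : ℕ) (U : Set ℂ) (hU : IsOpen U) (f : ℂ → ℂ)
    (hf : DifferentiableOn ℂ f U) (z₀ : ℂ) (R : ℝ) (hR : 0 < R)
    (hUc : closedBall z₀ R ⊆ U)
    (a : Fin (n + 1) → A) (hspec : ∀ j, spectrum ℂ (a j) ⊆ ball z₀ R) :
    ncDivDiff f z₀ R (fun _ : Fin 1 => a (Fin.last n)) (fun i => i.elim0) =
      ncDivDiff f z₀ R (fun _ : Fin 1 => a 0) (fun i => i.elim0) +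
        ∑ j : Fin n,
          ncDivDiff f z₀ R
            (fun i : Fin (j.1 + 2) => a (Fin.castLE (Nat.succ_le_succ j.2) i))
            (fun i : Fin (j.1 + 1) =>
              a (Fin.last n) - a (Fin.castLE (Nat.succ_le_succ j.2) (Fin.castSucc i))) :=
  ncNewton_general n U f hf z₀ R hR hUc a hspec
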